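/- arXiv:1712.00686 — 2 statements merged into one kernel-verified Lean document; each statement's English description precedes it below -/
import Mathlib

section
/- Let D=(V,E) be a finite multidigraph and let e=(u,v) be a non-loop arc of D. Then σ̂(D;x,y) = σ̂(D_{-e};x,y) + x·σ̂(D_{/e};x,y) − x·σ̂(D_{†e};x,y). -/
open Classical

/-- A finite multidigraph: a finite set `V` of vertices (natural numbers),
a finite set `A` of arc identifiers, and a map `ends` assigning to each arc
identifier its (source, target) pair of vertices.  Parallel arcs are distinct
identifiers with the same endpoints; loops are arcs with equal endpoints. -/
structure MDigraph where
  V : Finset ℕ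
  A : Finset ℕ
  ends : ℕ → ℕ × ℕ

namespace MDigraph

/-- Every arc has both endpoints in the vertex set. -/
def WellFormed (D : MDigraph) : Prop :=
  ∀ a ∈ D.A, (D.ends a).1 ∈ D.V ∧ (D.ends a).2 ∈ D.V

/-- An arc is a loop if its source equals its target. -/
def IsLoop (D : MDigraph) (e : ℕ) : Prop := (D.ends e).1 = (D.ends e).2

/-- Arc deletion `D_{-e}`. -/
def delArc (D : MDigraph) (e : ℕ) : MDigraph := ⟨D.V, D.A.erase e, D.ends⟩

/-- Arc contraction `D_{/e}`.  For a non-loop arc `e = (u,v)`: merge `u` and `v`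
into a single vertex (named `u`), removing exactly the arcs of the form `(u,x)`
and `(y,v)`.  For a loop `e = (u,u)`: delete `u` together with all incident arcs. -/
noncomputable def contractArc (D : MDigraph) (e : ℕ) : MDigraph :=
  let u := (D.ends e).1
  let v := (D.ends e).2
  if u = v then
    ⟨D.V.erase u, D.A.filter (fun a => (D.ends a).1 ≠ u ∧ (D.ends a).2 ≠ u), D.ends⟩
  else
    ⟨D.V.erase v, D.A.filter (fun a => (D.ends a).1 ≠ u ∧ (D.ends a).2 ≠ v),
      fun a => ((if (D.ends a).1 = v then u else (D.ends a).1),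
                (if (D.ends a).2 = v then u else (D.ends a).2))⟩

/-- Arc extraction `D_{†e}`: delete both endpoints of `e` and all arcs incident to them. -/
noncomputable def extractArc (D : MDigraph) (e : ℕ) : MDigraph :=
  let u := (D.ends e).1
  let v := (D.ends e).2
  ⟨(D.V.erase u).erase v,
   D.A.filter (fun a =>
     (D.ends a).1 ≠ u ∧ (D.ends a).1 ≠ v ∧ (D.ends a).2 ≠ u ∧ (D.ends a).2 ≠ v),
   D.ends⟩

/-- Add one new arc with endpoints `p` (using a fresh arc identifier). -/
noncomputable def addArc (D : MDigraph) (p : ℕ × ℕ) : MDigraph :=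
  ⟨D.V, insert (D.A.sup id + 1) D.A, Function.update D.ends (D.A.sup id + 1) p⟩

/-- Vertex deletion `D_{-v}`. -/
noncomputable def delVertex (D : MDigraph) (v : ℕ) : MDigraph :=
  ⟨D.V.erase v, D.A.filter (fun a => (D.ends a).1 ≠ v ∧ (D.ends a).2 ≠ v), D.ends⟩

/-- Vertex contraction `D_{/v}`: delete `v`, and for every arc `(u,v)` into `v`
and every arc `(v,w)` out of `v` add a new arc `(u,w)`; thus the multiplicity of
a new arc `(u,w)` is the multiplicity of `(u,v)` times that of `(v,w)`. -/
noncomputable def contractVertex (D : MDigraph) (v : ℕ) : MDigraph :=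
  ⟨D.V.erase v,
   ((D.A.filter (fun a => (D.ends a).1 ≠ v ∧ (D.ends a).2 ≠ v)).image (fun a => 2 * a)) ∪
     (((D.A.filter (fun a => (D.ends a).2 = v)) ×ˢ (D.A.filter (fun a => (D.ends a).1 = v))).image
       (fun p => 2 * Nat.pair p.1 p.2 + 1)),
   fun n =>
     if n % 2 = 0 then D.ends (n / 2)
     else ((D.ends (Nat.unpair ((n - 1) / 2)).1).1, (D.ends (Nat.unpair ((n - 1) / 2)).2).2)⟩

/-- The arc-less digraph on `n` vertices. -/
def emptyD (n : ℕ) : MDigraph := ⟨Finset.range n, ∅, fun _ => (0, 0)⟩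

/-- Disjoint union of two multidigraphs (vertices and arcs relabelled evenly/oddly). -/
noncomputable def disjUnion (D₁ D₂ : MDigraph) : MDigraph :=
  ⟨(D₁.V.image (fun v => 2 * v)) ∪ (D₂.V.image (fun v => 2 * v + 1)),
   (D₁.A.image (fun a => 2 * a)) ∪ (D₂.A.image (fun a => 2 * a + 1)),
   fun n =>
     if n % 2 = 0 then (2 * (D₁.ends (n / 2)).1, 2 * (D₁.ends (n / 2)).2)
     else (2 * (D₂.ends (n / 2)).1 + 1, 2 * (D₂.ends (n / 2)).2 + 1)⟩

/-- Isomorphism of multidigraphs. -/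
def Iso (D₁ D₂ : MDigraph) : Prop :=
  ∃ φ ψ : ℕ → ℕ, Set.BijOn φ ↑D₁.V ↑D₂.V ∧ Set.BijOn ψ ↑D₁.A ↑D₂.A ∧
    ∀ a ∈ D₁.A, D₂.ends (ψ a) = (φ (D₁.ends a).1, φ (D₁.ends a).2)

/-- `C` is (the arc set of) a directed cycle of length `k` in `D`: `k` distinct arcs
forming a closed directed walk through `k` distinct vertices (`k ≥ 1`;
a loop is a directed cycle of length 1). -/
def IsCycle (D : MDigraph) (C : Finset ℕ) (k : ℕ) : Prop :=
  1 ≤ k ∧ ∃ v a : ℕ → ℕ,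
    (∀ i j, i < k → j < k → v i = v j → i = j) ∧
    (∀ i j, i < k → j < k → a i = a j → i = j) ∧
    (∀ i, i < k → a i ∈ D.A ∧ D.ends (a i) = (v i, v ((i + 1) % k))) ∧
    C = (Finset.range k).image a

/-- `P` is (the arc set of) a directed path of length `k` in `D`: `k` distinct arcs
forming a directed walk through `k+1` distinct vertices (`k ≥ 1`). -/
def IsPath (D : MDigraph) (P : Finset ℕ) (k : ℕ) : Prop :=
  1 ≤ k ∧ ∃ v a : ℕ → ℕ,
    (∀ i j, i ≤ k → j ≤ k → v i = v j → i = j) ∧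
    (∀ i j, i < k → j < k → a i = a j → i = j) ∧
    (∀ i, i < k → a i ∈ D.A ∧ D.ends (a i) = (v i, v (i + 1))) ∧
    P = (Finset.range k).image a

/-- Number `c_k(D)` of directed cycles of length `k`. -/
noncomputable def cycCount (D : MDigraph) (k : ℕ) : ℕ :=
  (D.A.powerset.filter (fun C => IsCycle D C k)).card

/-- Number `p_k(D)` of directed paths of length `k`. -/
noncomputable def pathCount (D : MDigraph) (k : ℕ) : ℕ :=
  (D.A.powerset.filter (fun P => IsPath D P k)).card

/-- The cycle polynomial `σ(D;x) = ∑_k c_k(D) x^k`. -/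
noncomputable def cyclePoly (D : MDigraph) : Polynomial ℝ :=
  ∑ k ∈ Finset.range (D.A.card + 1), (cycCount D k : ℝ) • Polynomial.X ^ k

/-- The path polynomial `π(D;x) = ∑_k p_k(D) x^k`. -/
noncomputable def pathPoly (D : MDigraph) : Polynomial ℝ :=
  ∑ k ∈ Finset.range (D.A.card + 1), (pathCount D k : ℝ) • Polynomial.X ^ k

/-- Out-degree of `v`: arcs with tail `v`, counted with multiplicity. -/
noncomputable def outDeg (D : MDigraph) (v : ℕ) : ℕ :=
  (D.A.filter (fun a => (D.ends a).1 = v)).card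

/-- In-degree of `v`: arcs with head `v`, counted with multiplicity. -/
noncomputable def inDeg (D : MDigraph) (v : ℕ) : ℕ :=
  (D.A.filter (fun a => (D.ends a).2 = v)).card

/-- `P` is a directed path of length `k` in `D` beginning at `v0`. -/
def IsPathFrom (D : MDigraph) (v0 : ℕ) (P : Finset ℕ) (k : ℕ) : Prop :=
  1 ≤ k ∧ ∃ v a : ℕ → ℕ, v 0 = v0 ∧
    (∀ i j, i ≤ k → j ≤ k → v i = v j → i = j) ∧
    (∀ i j, i < k → j < k → a i = a j → i = j) ∧
    (∀ i, i < k → a i ∈ D.A ∧ D.ends (a i) = (v i, v (i + 1))) ∧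
    P = (Finset.range k).image a

/-- `P` is a directed path of length `k` in `D` ending at `v0`. -/
def IsPathTo (D : MDigraph) (v0 : ℕ) (P : Finset ℕ) (k : ℕ) : Prop :=
  1 ≤ k ∧ ∃ v a : ℕ → ℕ, v k = v0 ∧
    (∀ i j, i ≤ k → j ≤ k → v i = v j → i = j) ∧
    (∀ i j, i < k → j < k → a i = a j → i = j) ∧
    (∀ i, i < k → a i ∈ D.A ∧ D.ends (a i) = (v i, v (i + 1))) ∧
    P = (Finset.range k).image a

/-- `p_k(D,v,+)`: number of directed paths of length `k` beginning at `v`. -/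
noncomputable def pathFromCount (D : MDigraph) (v : ℕ) (k : ℕ) : ℕ :=
  (D.A.powerset.filter (fun P => IsPathFrom D v P k)).card

/-- `p_k(D,v,−)`: number of directed paths of length `k` ending at `v`. -/
noncomputable def pathToCount (D : MDigraph) (v : ℕ) (k : ℕ) : ℕ :=
  (D.A.powerset.filter (fun P => IsPathTo D v P k)).card

/-- `π_{v+}(D;x) = ∑_k p_k(D,v,+) x^k`. -/
noncomputable def pathFromPoly (D : MDigraph) (v : ℕ) : Polynomial ℝ :=
  ∑ k ∈ Finset.range (D.A.card + 1), (pathFromCount D v k : ℝ) • Polynomial.X ^ k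

/-- `π_{v-}(D;x) = ∑_k p_k(D,v,−) x^k`. -/
noncomputable def pathToPoly (D : MDigraph) (v : ℕ) : Polynomial ℝ :=
  ∑ k ∈ Finset.range (D.A.card + 1), (pathToCount D v k : ℝ) • Polynomial.X ^ k

/-- In the spanning subgraph `D⟨F⟩`, every vertex has out-degree ≤ 1 and
in-degree ≤ 1; equivalently, every component of `D⟨F⟩` is a directed cycle,
a directed path, or an isolated vertex. -/
def DegOK (D : MDigraph) (F : Finset ℕ) : Prop :=
  ∀ w : ℕ, (F.filter (fun a => (D.ends a).1 = w)).card ≤ 1 ∧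
    (F.filter (fun a => (D.ends a).2 = w)).card ≤ 1

/-- `kc(D⟨F⟩)`: the number of components of the spanning subgraph `D⟨F⟩` that are
directed cycles (for degree-constrained `F`, these are exactly the directed
cycles contained in `F`). -/
noncomputable def kcF (D : MDigraph) (F : Finset ℕ) : ℕ :=
  (F.powerset.filter (fun C => ∃ k, IsCycle D C k)).card

/-- `kp(D⟨F⟩)`: the number of components of the spanning subgraph `D⟨F⟩` that are
directed paths with at least one arc (for degree-constrained `F`, counted by
their initial vertices: vertices that are the tail of an arc of `F` but the
head of no arc of `F`). -/
noncomputable def kpF (D : MDigraph) (F : Finset ℕ) : ℕ :=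
  ((F.image (fun a => (D.ends a).1)).filter
    (fun w => (F.filter (fun a => (D.ends a).2 = w)).card = 0)).card

/-- The number of vertices covered by (incident to) the arcs of `F`. -/
noncomputable def coveredCard (D : MDigraph) (F : Finset ℕ) : ℕ :=
  ((F.image (fun a => (D.ends a).1)) ∪ (F.image (fun a => (D.ends a).2))).card

/-- `k(D⟨F⟩)`: total number of connected components of the spanning subgraph
`D⟨F⟩` (isolated vertices included), for degree-constrained `F` in a
well-formed digraph. -/
noncomputable def kF (D : MDigraph) (F : Finset ℕ) : ℕ :=
  D.V.card - coveredCard D F + kcF D F + kpF D F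

/-- `c(D⟨F⟩)`: number of covered components (components with at least one arc). -/
noncomputable def cF (D : MDigraph) (F : Finset ℕ) : ℕ := kcF D F + kpF D F

/-- `c₁(D⟨F⟩)`: number of loops in `F`. -/
noncomputable def loopCount (D : MDigraph) (F : Finset ℕ) : ℕ :=
  (F.filter (fun a => (D.ends a).1 = (D.ends a).2)).card

/-- The bivariate cycle polynomial
`σ̂(D;x,y) = ∑_F x^{|F|} y^{kc(D⟨F⟩)}`, the sum being over all arc subsets `F`
such that every component of `D⟨F⟩` is a directed cycle or an isolated vertex. -/
noncomputable def biCycPoly (D : MDigraph) : MvPolynomial (Fin 2) ℝ :=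
  ∑ F ∈ D.A.powerset.filter (fun F => DegOK D F ∧ kpF D F = 0),
    MvPolynomial.X 0 ^ F.card * MvPolynomial.X 1 ^ kcF D F

/-- The bivariate path polynomial
`π̂(D;x,y) = ∑_F x^{|F|} y^{kp(D⟨F⟩)}`, the sum being over all arc subsets `F`
such that every component of `D⟨F⟩` is a directed path or an isolated vertex. -/
noncomputable def biPathPoly (D : MDigraph) : MvPolynomial (Fin 2) ℝ :=
  ∑ F ∈ D.A.powerset.filter (fun F => DegOK D F ∧ kcF D F = 0),
    MvPolynomial.X 0 ^ F.card * MvPolynomial.X 1 ^ kpF D F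

/-- The trivariate cycle-path polynomial
`σ̂π(D;x,y,z) = ∑_F x^{|F|} y^{kc(D⟨F⟩)} z^{kp(D⟨F⟩)}`, the sum being over all
arc subsets `F` in which every vertex has in- and out-degree at most 1. -/
noncomputable def triPoly (D : MDigraph) : MvPolynomial (Fin 3) ℝ :=
  ∑ F ∈ D.A.powerset.filter (fun F => DegOK D F),
    MvPolynomial.X 0 ^ F.card * MvPolynomial.X 1 ^ kcF D F * MvPolynomial.X 2 ^ kpF D F

/-- The geometric cover polynomial `C̃(D;x,y) = ∑_{i,j} c_{i,j}(D) x^i y^j`,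
where `c_{i,j}(D)` is the number of ways of disjointly covering all vertices of
`D` with `i` directed paths and `j` directed cycles (isolated vertices counting
as paths of length 0): a cover is an arc subset `F` with all in- and out-degrees
at most 1, contributing `j = kc(D⟨F⟩)` cycles and
`i = kp(D⟨F⟩) + (number of uncovered vertices)` paths. -/
noncomputable def geomCover (D : MDigraph) (x y : ℝ) : ℝ :=
  ∑ F ∈ D.A.powerset.filter (fun F => DegOK D F),
    x ^ (kpF D F + (D.V.card - coveredCard D F)) * y ^ kcF D F

/-- No vertex is incident both to an arc of `A` and to an arc of `B`. -/
def NoCommonVertex (D : MDigraph) (A B : Finset ℕ) : Prop :=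
  ∀ a ∈ A, ∀ b ∈ B,
    (D.ends a).1 ≠ (D.ends b).1 ∧ (D.ends a).1 ≠ (D.ends b).2 ∧
    (D.ends a).2 ≠ (D.ends b).1 ∧ (D.ends a).2 ≠ (D.ends b).2

/-- The explicit polynomial
`N(D;x,y,z) = ∑_{(A,B)} x^{k(D⟨A∪B⟩)−c(D⟨B⟩)−c₁(D⟨A⟩)} y^{|A|+|B|−c(D⟨B⟩)} z^{c(D⟨B⟩)}`,
summing over pairs of disjoint arc subsets `A, B` sharing no vertex such that
every component of `D⟨A∪B⟩` is a directed cycle, a directed path or an isolated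
vertex. -/
noncomputable def NPoly (D : MDigraph) : MvPolynomial (Fin 3) ℝ :=
  ∑ p ∈ (D.A.powerset ×ˢ D.A.powerset).filter
      (fun p => Disjoint p.1 p.2 ∧ NoCommonVertex D p.1 p.2 ∧ DegOK D (p.1 ∪ p.2)),
    MvPolynomial.X 0 ^ (kF D (p.1 ∪ p.2) - cF D p.2 - loopCount D p.1) *
      MvPolynomial.X 1 ^ (p.1.card + p.2.card - cF D p.2) *
      MvPolynomial.X 2 ^ cF D p.2

end MDigraph

/-- A finite undirected graph: a finite vertex set and a finite set of
unordered pairs as edges. -/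
structure SGraph where
  V : Finset ℕ
  E : Finset (Sym2 ℕ)

namespace SGraph

/-- `G` is a simple graph: no loops, and all edge endpoints are vertices. -/
def Simple (G : SGraph) : Prop :=
  (∀ s ∈ G.E, ¬ s.IsDiag) ∧ ∀ s ∈ G.E, ∀ a ∈ s, a ∈ G.V

/-- `P` is (the edge set of) an undirected path of length `k` in `G`. -/
def IsUPath (G : SGraph) (P : Finset (Sym2 ℕ)) (k : ℕ) : Prop :=
  1 ≤ k ∧ ∃ v : ℕ → ℕ,
    (∀ i j, i ≤ k → j ≤ k → v i = v j → i = j) ∧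
    (∀ i, i < k → s(v i, v (i + 1)) ∈ G.E) ∧
    P = (Finset.range k).image (fun i => s(v i, v (i + 1)))

/-- `C` is (the edge set of) an undirected cycle of length `k ≥ 3` in `G`. -/
def IsUCycle (G : SGraph) (C : Finset (Sym2 ℕ)) (k : ℕ) : Prop :=
  3 ≤ k ∧ ∃ v : ℕ → ℕ,
    (∀ i j, i < k → j < k → v i = v j → i = j) ∧
    (∀ i, i < k → s(v i, v ((i + 1) % k)) ∈ G.E) ∧
    C = (Finset.range k).image (fun i => s(v i, v ((i + 1) % k)))

/-- `p_k(G)`: number of undirected paths of length `k` in `G`. -/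
noncomputable def uPathCount (G : SGraph) (k : ℕ) : ℕ :=
  (G.E.powerset.filter (fun P => IsUPath G P k)).card

/-- `c_k(G)`: number of undirected cycles of length `k` in `G`. -/
noncomputable def uCycCount (G : SGraph) (k : ℕ) : ℕ :=
  (G.E.powerset.filter (fun C => IsUCycle G C k)).card

/-- `π(G;x) = ∑_k p_k(G) x^k`. -/
noncomputable def uPathPoly (G : SGraph) : Polynomial ℝ :=
  ∑ k ∈ Finset.range (G.E.card + 1), (uPathCount G k : ℝ) • Polynomial.X ^ k

/-- `σ(G;x) = ∑_k c_k(G) x^k`. -/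
noncomputable def uCycPoly (G : SGraph) : Polynomial ℝ :=
  ∑ k ∈ Finset.range (G.E.card + 1), (uCycCount G k : ℝ) • Polynomial.X ^ k

/-- The digraph `D(G)` obtained from `G` by replacing each edge `{u,v}` by the
two oppositely oriented arcs `(u,v)` and `(v,u)`. -/
noncomputable def toDigraph (G : SGraph) : MDigraph :=
  ⟨G.V, ((G.V ×ˢ G.V).filter (fun p => s(p.1, p.2) ∈ G.E)).image (fun p => Nat.pair p.1 p.2),
   Nat.unpair⟩

end SGraph

/-!
Split the sum defining `σ̂(D)` according to whether `F` contains `e = (u, v)`. The sets avoiding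
`e` are exactly those of `D_{-e}`. Deleting `e` from the sets containing it is a bijection onto the
sets of `D_{/e}` in which the merged vertex `u` is covered: it removes one arc and keeps the number
of cycles, the cycle through `e` just losing that arc. The sets of `D_{/e}` leaving `u` uncovered
are exactly those of `D_{†e}`. Hence `σ̂(D) = σ̂(D_{-e}) + x (σ̂(D_{/e}) - σ̂(D_{†e}))`.
-/

theorem Nat.add_one_mod_of_lt {i k : ℕ} (hi : i < k) :
    (i + 1) % k = if i + 1 = k then 0 else i + 1 := by
  split_ifs with h
  · rw [h, Nat.mod_self]
  · exact Nat.mod_eq_of_lt (by omega)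

theorem Finset.image_range_add_one {β : Type*} [DecidableEq β] (f : ℕ → β) (n : ℕ) :
    (Finset.range (n + 1)).image f = insert (f 0) ((Finset.range n).image fun i => f (i + 1)) := by
  rw [Finset.range_add_one', Finset.image_insert, Finset.map_eq_image, Finset.image_image]
  rfl

theorem Finset.image_range_add_mod {k : ℕ} (hk : 0 < k) (c : ℕ) :
    (Finset.range k).image (fun i => (i + c) % k) = Finset.range k := by
  refine Finset.eq_of_subset_of_card_le
    (fun x hx => ?_) (Finset.card_image_of_injOn fun i hi j hj h => ?_).ge
  · obtain ⟨i, -, rfl⟩ := Finset.mem_image.mp hx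
    exact Finset.mem_range.mpr (Nat.mod_lt _ hk)
  · exact (Nat.ModEq.add_right_cancel' c h).eq_of_lt_of_lt
      (Finset.mem_range.mp hi) (Finset.mem_range.mp hj)

theorem Finset.forall_card_filter_eq_le_one_iff {α β : Type*} [DecidableEq β]
    {s : Finset α} {f : α → β} :
    (∀ w, (s.filter fun a => f a = w).card ≤ 1) ↔ Set.InjOn f s := by
  simp only [Finset.card_le_one, Finset.mem_filter]
  exact ⟨fun h a ha b hb hab => h (f b) a ⟨ha, hab⟩ b ⟨hb, rfl⟩,
    fun h w a ha b hb => h ha.1 hb.1 (ha.2.trans hb.2.symm)⟩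

namespace MDigraph

section CycleWalk

variable {D D₁ D₂ : MDigraph} {C : Finset ℕ} {k : ℕ} {V A : ℕ → ℕ}

structure IsCycleWalk (D : MDigraph) (k : ℕ) (V A : ℕ → ℕ) : Prop where
  vert_inj : ∀ i j, i < k → j < k → V i = V j → i = j
  arc_inj : ∀ i j, i < k → j < k → A i = A j → i = j
  arc_mem : ∀ i, i < k → A i ∈ D.A
  ends_eq : ∀ i, i < k → D.ends (A i) = (V i, V ((i + 1) % k))

theorem isCycle_iff :
    IsCycle D C k ↔ 1 ≤ k ∧ ∃ V A, IsCycleWalk D k V A ∧ C = (Finset.range k).image A := by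
  constructor
  · rintro ⟨hk, V, A, hV, hA, hE, rfl⟩
    exact ⟨hk, V, A, ⟨hV, hA, fun i hi => (hE i hi).1, fun i hi => (hE i hi).2⟩, rfl⟩
  · rintro ⟨hk, V, A, ⟨hV, hA, hm, hE⟩, rfl⟩
    exact ⟨hk, V, A, hV, hA, fun i hi => ⟨hm i hi, hE i hi⟩, rfl⟩

theorem IsCycleWalk.rotate (hw : IsCycleWalk D k V A) (hk : 0 < k) (c : ℕ) :
    IsCycleWalk D k (fun i => V ((i + c) % k)) (fun i => A ((i + c) % k)) := by
  have hlt : ∀ i, (i + c) % k < k := fun i => Nat.mod_lt _ hk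
  have hcancel : ∀ i j, i < k → j < k → (i + c) % k = (j + c) % k → i = j :=
    fun i j hi hj h => (Nat.ModEq.add_right_cancel' c h).eq_of_lt_of_lt hi hj
  refine ⟨fun i j hi hj h => hcancel i j hi hj (hw.vert_inj _ _ (hlt i) (hlt j) h),
    fun i j hi hj h => hcancel i j hi hj (hw.arc_inj _ _ (hlt i) (hlt j) h),
    fun i _ => hw.arc_mem _ (hlt i), fun i _ => ?_⟩
  rw [hw.ends_eq _ (hlt i), Nat.mod_add_mod, Nat.mod_add_mod, add_right_comm]

theorem IsCycle.exists_walk_start (h : IsCycle D C k) {a : ℕ} (ha : a ∈ C) :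
    1 ≤ k ∧ ∃ V A, IsCycleWalk D k V A ∧ C = (Finset.range k).image A ∧ A 0 = a := by
  obtain ⟨hk, V, A, hw, rfl⟩ := isCycle_iff.mp h
  obtain ⟨c, hc, rfl⟩ := Finset.mem_image.mp ha
  refine ⟨hk, _, _, hw.rotate hk c, ?_, by simp [Nat.mod_eq_of_lt (Finset.mem_range.mp hc)]⟩
  rw [← Function.comp_def A, ← Finset.image_image, Finset.image_range_add_mod hk]

theorem IsCycle.subset_A (h : IsCycle D C k) : C ⊆ D.A := by
  obtain ⟨-, V, A, hw, rfl⟩ := isCycle_iff.mp h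
  intro a ha
  obtain ⟨i, hi, rfl⟩ := Finset.mem_image.mp ha
  exact hw.arc_mem i (Finset.mem_range.mp hi)

theorem IsCycle.exists_head_eq_tail (h : IsCycle D C k) {a : ℕ} (ha : a ∈ C) :
    ∃ b ∈ C, (D.ends b).2 = (D.ends a).1 := by
  obtain ⟨hk, V, A, hw, rfl, rfl⟩ := h.exists_walk_start ha
  refine ⟨A (k - 1), Finset.mem_image_of_mem A (by simp; omega), ?_⟩
  rw [hw.ends_eq _ (by omega), hw.ends_eq _ hk, Nat.sub_add_cancel hk, Nat.mod_self]

theorem IsCycle.of_ends_eq (h : IsCycle D₁ C k) (hA : C ⊆ D₂.A)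
    (hE : ∀ a ∈ C, D₁.ends a = D₂.ends a) : IsCycle D₂ C k := by
  obtain ⟨hk, V, A, hw, rfl⟩ := isCycle_iff.mp h
  have hmem : ∀ i, i < k → A i ∈ (Finset.range k).image A :=
    fun i hi => Finset.mem_image_of_mem A (Finset.mem_range.mpr hi)
  exact isCycle_iff.mpr ⟨hk, V, A, ⟨hw.vert_inj, hw.arc_inj, fun i hi => hA (hmem i hi),
    fun i hi => (hE _ (hmem i hi)).symm.trans (hw.ends_eq i hi)⟩, rfl⟩

theorem kcF_congr {F : Finset ℕ} (h₁ : F ⊆ D₁.A) (h₂ : F ⊆ D₂.A)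
    (hE : ∀ a ∈ F, D₁.ends a = D₂.ends a) : kcF D₁ F = kcF D₂ F := by
  refine congrArg Finset.card (Finset.filter_congr fun C hC => ?_)
  have hCF := Finset.mem_powerset.mp hC
  exact ⟨fun ⟨k, h⟩ => ⟨k, h.of_ends_eq (hCF.trans h₂) fun a ha => hE a (hCF ha)⟩,
    fun ⟨k, h⟩ => ⟨k, h.of_ends_eq (hCF.trans h₁) fun a ha => (hE a (hCF ha)).symm⟩⟩

end CycleWalk

section CycleUnion

variable {D D₁ D₂ : MDigraph} {F : Finset ℕ}

/-- Every component of `D⟨F⟩` is a directed cycle or an isolated vertex. -/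
structure IsCycleUnion (D : MDigraph) (F : Finset ℕ) : Prop where
  tail_injOn : Set.InjOn (fun a => (D.ends a).1) F
  head_injOn : Set.InjOn (fun a => (D.ends a).2) F
  exists_head_eq_tail : ∀ a ∈ F, ∃ b ∈ F, (D.ends b).2 = (D.ends a).1

theorem degOK_iff_injOn :
    DegOK D F ↔ Set.InjOn (fun a => (D.ends a).1) F ∧ Set.InjOn (fun a => (D.ends a).2) F := by
  simp only [DegOK, forall_and]
  exact and_congr Finset.forall_card_filter_eq_le_one_iff Finset.forall_card_filter_eq_le_one_iff

theorem kpF_eq_zero_iff : kpF D F = 0 ↔ ∀ a ∈ F, ∃ b ∈ F, (D.ends b).2 = (D.ends a).1 := by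
  simp only [kpF, Finset.card_eq_zero, Finset.filter_eq_empty_iff, Finset.mem_image]
  push Not
  exact ⟨fun h a ha => h ⟨a, ha, rfl⟩, by rintro h _ ⟨a, ha, rfl⟩; exact h a ha⟩

theorem degOK_and_kpF_eq_zero_iff : DegOK D F ∧ kpF D F = 0 ↔ IsCycleUnion D F := by
  rw [degOK_iff_injOn, kpF_eq_zero_iff]
  exact ⟨fun ⟨⟨h₁, h₂⟩, h₃⟩ => ⟨h₁, h₂, h₃⟩, fun ⟨h₁, h₂, h₃⟩ => ⟨⟨h₁, h₂⟩, h₃⟩⟩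

theorem IsCycleUnion.of_ends_eq (h : IsCycleUnion D₁ F)
    (hE : ∀ a ∈ F, D₁.ends a = D₂.ends a) : IsCycleUnion D₂ F where
  tail_injOn := h.tail_injOn.congr fun a ha => by simp only [hE a ha]
  head_injOn := h.head_injOn.congr fun a ha => by simp only [hE a ha]
  exists_head_eq_tail a ha := by
    obtain ⟨b, hb, hba⟩ := h.exists_head_eq_tail a ha
    exact ⟨b, hb, by rw [← hE a ha, ← hE b hb, hba]⟩

noncomputable def cycleUnions (D : MDigraph) : Finset (Finset ℕ) :=
  D.A.powerset.filter (IsCycleUnion D)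

noncomputable def cycleMonomial (D : MDigraph) (F : Finset ℕ) : MvPolynomial (Fin 2) ℝ :=
  MvPolynomial.X 0 ^ F.card * MvPolynomial.X 1 ^ kcF D F

theorem mem_cycleUnions : F ∈ D.cycleUnions ↔ F ⊆ D.A ∧ IsCycleUnion D F := by
  rw [cycleUnions, Finset.mem_filter, Finset.mem_powerset]

theorem biCycPoly_eq_sum : D.biCycPoly = ∑ F ∈ D.cycleUnions, D.cycleMonomial F :=
  Finset.sum_congr (Finset.filter_congr fun _ _ => degOK_and_kpF_eq_zero_iff) fun _ _ => rfl

theorem sum_cycleMonomial_eq_biCycPoly {S : Finset (Finset ℕ)}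
    (hS : ∀ F, F ∈ S ↔ F ∈ D₂.cycleUnions)
    (hE : ∀ F ∈ S, F ⊆ D₁.A ∧ ∀ a ∈ F, D₁.ends a = D₂.ends a) :
    ∑ F ∈ S, D₁.cycleMonomial F = D₂.biCycPoly := by
  rw [biCycPoly_eq_sum]
  refine Finset.sum_congr (Finset.ext hS) fun F hF => ?_
  obtain ⟨hF₁, hE⟩ := hE F ((hS F).mpr hF)
  rw [cycleMonomial, cycleMonomial, kcF_congr hF₁ (mem_cycleUnions.mp hF).1 hE]

theorem sum_filter_notMem_eq_biCycPoly_delArc (e : ℕ) :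
    ∑ F ∈ D.cycleUnions.filter (e ∉ ·), D.cycleMonomial F = (D.delArc e).biCycPoly := by
  refine sum_cycleMonomial_eq_biCycPoly (fun F => ?_) fun F hF => ?_
  · simp only [Finset.mem_filter, mem_cycleUnions, delArc, Finset.subset_erase]
    exact ⟨fun ⟨⟨h₁, h₂⟩, h₃⟩ => ⟨⟨h₁, h₃⟩, h₂.of_ends_eq fun _ _ => rfl⟩,
      fun ⟨⟨h₁, h₃⟩, h₂⟩ => ⟨⟨h₁, h₂.of_ends_eq fun _ _ => rfl⟩, h₃⟩⟩
  · exact ⟨(mem_cycleUnions.mp (Finset.mem_filter.mp hF).1).1, fun _ _ => rfl⟩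

end CycleUnion

section Contraction

variable {D : MDigraph} {C : Finset ℕ} {e u v k a : ℕ}

theorem contractArc_ends_eq (hend : D.ends e = (u, v)) (huv : u ≠ v) (a : ℕ) :
    (D.contractArc e).ends a = (if (D.ends a).1 = v then u else (D.ends a).1,
      if (D.ends a).2 = v then u else (D.ends a).2) := by
  simp only [contractArc, hend, if_neg huv]

theorem mem_contractArc_A (hend : D.ends e = (u, v)) (huv : u ≠ v) :
    a ∈ (D.contractArc e).A ↔ a ∈ D.A ∧ (D.ends a).1 ≠ u ∧ (D.ends a).2 ≠ v := by
  simp only [contractArc, hend, if_neg huv, Finset.mem_filter]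

theorem notMem_contractArc_A (hend : D.ends e = (u, v)) (huv : u ≠ v) :
    e ∉ (D.contractArc e).A := by
  simp [mem_contractArc_A hend huv, hend]

theorem contractArc_tail (hend : D.ends e = (u, v)) (huv : u ≠ v) (a : ℕ) :
    ((D.contractArc e).ends a).1 = if (D.ends a).1 = v then u else (D.ends a).1 := by
  rw [contractArc_ends_eq hend huv]

theorem contractArc_head (hend : D.ends e = (u, v)) (huv : u ≠ v) (a : ℕ) :
    ((D.contractArc e).ends a).2 = if (D.ends a).2 = v then u else (D.ends a).2 := by
  rw [contractArc_ends_eq hend huv]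

theorem contractArc_tail_ne (hend : D.ends e = (u, v)) (huv : u ≠ v) (a : ℕ) :
    ((D.contractArc e).ends a).1 ≠ v := by
  rw [contractArc_tail hend huv]
  split_ifs with h
  exacts [huv, h]

theorem contractArc_head_of_mem (hend : D.ends e = (u, v)) (huv : u ≠ v)
    (ha : a ∈ (D.contractArc e).A) : ((D.contractArc e).ends a).2 = (D.ends a).2 := by
  rw [contractArc_head hend huv, if_neg ((mem_contractArc_A hend huv).mp ha).2.2]

theorem contractArc_tail_eq_iff (hend : D.ends e = (u, v)) (huv : u ≠ v)
    (ha : a ∈ (D.contractArc e).A) : ((D.contractArc e).ends a).1 = u ↔ (D.ends a).1 = v := by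
  rw [contractArc_tail hend huv]
  split_ifs with h
  · exact iff_of_true rfl h
  · exact iff_of_false ((mem_contractArc_A hend huv).mp ha).2.1 h

theorem contractArc_ends_eq_self (hend : D.ends e = (u, v)) (huv : u ≠ v)
    (h₁ : (D.ends a).1 ≠ v) (h₂ : (D.ends a).2 ≠ v) : (D.contractArc e).ends a = D.ends a := by
  rw [contractArc_ends_eq hend huv, if_neg h₁, if_neg h₂]

theorem tail_eq_of_mem_contractArc_A (hend : D.ends e = (u, v)) (huv : u ≠ v)
    (ha : a ∈ (D.contractArc e).A) :
    (D.ends a).1 =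
      if ((D.contractArc e).ends a).1 = u then v else ((D.contractArc e).ends a).1 := by
  split_ifs with h
  · exact (contractArc_tail_eq_iff hend huv ha).mp h
  · rw [contractArc_tail hend huv,
      if_neg fun h' => h ((contractArc_tail_eq_iff hend huv ha).mpr h')]

theorem IsCycleWalk.contractArc (hend : D.ends e = (u, v)) (huv : u ≠ v) {V A : ℕ → ℕ}
    (hw : IsCycleWalk D (k + 1) V A) (hk : 1 ≤ k) (hV0 : V 0 = u) (hV1 : V 1 = v) :
    IsCycleWalk (D.contractArc e) k (fun i => if i = 0 then u else V (i + 1))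
      fun i => A (i + 1) := by
  set V' : ℕ → ℕ := fun i => if i = 0 then u else V (i + 1) with hV'
  have hVne : ∀ i j, i < k + 1 → j < k + 1 → i ≠ j → V i ≠ V j :=
    fun i j hi hj hij h => hij (hw.vert_inj i j hi hj h)
  -- `u = V 0` and `v = V 1` are the only vertices of the cycle identified by the contraction
  have hmerge : ∀ j, j < k + 1 → (if V j = v then u else V j) = V' (j - 1) := by
    intro j hj
    rcases j with _ | _ | j
    · simp [hV0, huv, hV']
    · simp [hV1, hV']
    · have hVj : V (j + 2) ≠ v := hV1 ▸ hVne (j + 2) 1 hj (by omega) (by omega)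
      simp [hV', hVj]
  have hsucc : ∀ i, i < k →
      (i + 1 + 1) % (k + 1) - 1 = (i + 1) % k ∧ (i + 1 + 1) % (k + 1) ≠ 1 := by
    intro i hi
    rw [Nat.add_one_mod_of_lt (show i + 1 < k + 1 by omega), Nat.add_one_mod_of_lt hi]
    split_ifs <;> omega
  refine ⟨fun i j hi hj hij => ?_, fun i j hi hj hij => by
    simpa using hw.arc_inj _ _ (by omega) (by omega) hij, fun i hi => ?_, fun i hi => ?_⟩
  · rcases i with _ | i <;> rcases j with _ | j <;>
      simp only [hV', if_pos, if_neg (Nat.succ_ne_zero _)] at hij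
    · rfl
    · exact absurd (hV0.trans hij) (hVne 0 _ (by omega) (by omega) (by omega))
    · exact absurd (hij.trans hV0.symm) (hVne _ 0 (by omega) (by omega) (by omega))
    · simpa using hw.vert_inj _ _ (by omega) (by omega) hij
  · rw [mem_contractArc_A hend huv, hw.ends_eq (i + 1) (by omega), ← hV0, ← hV1]
    exact ⟨hw.arc_mem _ (by omega), hVne _ _ (by omega) (by omega) (by omega),
      hVne _ _ (Nat.mod_lt _ (by omega)) (by omega) (hsucc i hi).2⟩
  · rw [contractArc_ends_eq hend huv, hw.ends_eq (i + 1) (by omega), hmerge _ (by omega),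
      hmerge _ (Nat.mod_lt _ (by omega)), (hsucc i hi).1, Nat.add_sub_cancel]

theorem IsCycle.contractArc_erase (hend : D.ends e = (u, v)) (huv : u ≠ v)
    (h : IsCycle D C k) (heC : e ∈ C) :
    IsCycle (D.contractArc e) (C.erase e) (k - 1) ∧
      ∃ a ∈ C.erase e, ((D.contractArc e).ends a).1 = u := by
  obtain ⟨hk, V, A, hw, rfl, hA0⟩ := h.exists_walk_start heC
  have hV : V 0 = u ∧ V (1 % k) = v := by simpa [hA0, hend, eq_comm] using hw.ends_eq 0 hk
  obtain ⟨k, rfl⟩ : ∃ k', k = k' + 1 := ⟨k - 1, by omega⟩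
  have hk : 1 ≤ k := by
    by_contra hk0
    obtain rfl : k = 0 := by omega
    exact huv (hV.1.symm.trans hV.2)
  obtain ⟨hV0, hV1⟩ : V 0 = u ∧ V 1 = v := by rwa [Nat.mod_eq_of_lt (by omega)] at hV
  have he_notMem : e ∉ (Finset.range k).image fun i => A (i + 1) := by
    simp only [← hA0, Finset.mem_image, Finset.mem_range, not_exists, not_and]
    exact fun i hi h => by simpa using hw.arc_inj _ _ (by omega) (by omega) h
  rw [Finset.image_range_add_one, hA0, Finset.erase_insert he_notMem, Nat.add_sub_cancel]
  refine ⟨isCycle_iff.mpr ⟨hk, _, _, hw.contractArc hend huv hk hV0 hV1, rfl⟩,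
    A 1, Finset.mem_image_of_mem _ (by simpa), ?_⟩
  rw [contractArc_tail hend huv, hw.ends_eq 1 (by omega), if_pos hV1]

theorem IsCycleWalk.of_contractArc (hend : D.ends e = (u, v)) (huv : u ≠ v) (he : e ∈ D.A)
    {V A : ℕ → ℕ} (hw : IsCycleWalk (D.contractArc e) k V A) (hk : 1 ≤ k) (hV0 : V 0 = u) :
    IsCycleWalk D (k + 1) (fun i => if i = 1 then v else V (i - 1))
      fun i => if i = 0 then e else A (i - 1) := by
  -- truncated subtraction gives `V₁ 0 = V 0 = u`
  set V₁ : ℕ → ℕ := fun i => if i = 1 then v else V (i - 1) with hV₁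
  have htail' : ∀ i, i < k → ((D.contractArc e).ends (A i)).1 = V i :=
    fun i hi => by rw [hw.ends_eq i hi]
  have hVv : ∀ i, i < k → V i ≠ v := fun i hi => htail' i hi ▸ contractArc_tail_ne hend huv _
  -- the arc of the contracted cycle leaving the merged vertex `u` leaves `v` in `D`
  have htail : ∀ i, i < k → (D.ends (A i)).1 = V₁ (i + 1) := by
    intro i hi
    have hmem := hw.arc_mem i hi
    rcases i with _ | i
    · exact (contractArc_tail_eq_iff hend huv hmem).mp (htail' 0 hi ▸ hV0)
    · have hVu : V (i + 1) ≠ u := fun h => by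
        simpa using hw.vert_inj _ 0 hi hk (h.trans hV0.symm)
      rw [tail_eq_of_mem_contractArc_A hend huv hmem, htail' _ hi, if_neg hVu]
      simp [hV₁]
  have hhead : ∀ i, i < k → (D.ends (A i)).2 = V₁ ((i + 1 + 1) % (k + 1)) := by
    intro i hi
    rw [← contractArc_head_of_mem hend huv (hw.arc_mem i hi), hw.ends_eq i hi,
      Nat.add_one_mod_of_lt (show i + 1 < k + 1 by omega), Nat.add_one_mod_of_lt hi]
    split_ifs <;> first | omega | simp [hV₁]
  refine ⟨fun i j hi hj hij => ?_, fun i j hi hj hij => ?_, fun i hi => ?_, fun i hi => ?_⟩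
  · simp only [hV₁] at hij
    split_ifs at hij with hi1 hj1 hj1
    · omega
    · exact absurd hij.symm (hVv _ (by omega))
    · exact absurd hij (hVv _ (by omega))
    · have := hw.vert_inj _ _ (by omega) (by omega) hij
      omega
  · split_ifs at hij with hi0 hj0 hj0
    · omega
    · exact absurd (hij ▸ hw.arc_mem _ (by omega)) (notMem_contractArc_A hend huv)
    · exact absurd (hij ▸ hw.arc_mem _ (by omega)) (notMem_contractArc_A hend huv)
    · have := hw.arc_inj _ _ (by omega) (by omega) hij
      omega
  · rcases i with _ | i
    · exact he
    · exact ((mem_contractArc_A hend huv).mp (hw.arc_mem i (by omega))).1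
  · rcases i with _ | i
    · simp [hV₁, hend, hV0, Nat.mod_eq_of_lt (show 1 < k + 1 by omega)]
    · simp only [if_neg (Nat.succ_ne_zero i), Nat.add_sub_cancel]
      exact Prod.ext (htail i (by omega)) (hhead i (by omega))

theorem IsCycle.insert_of_contractArc (hend : D.ends e = (u, v)) (huv : u ≠ v) (he : e ∈ D.A)
    (h : IsCycle (D.contractArc e) C k) (hu : ∃ a ∈ C, ((D.contractArc e).ends a).1 = u) :
    IsCycle D (insert e C) (k + 1) := by
  obtain ⟨a, haC, hau⟩ := hu
  obtain ⟨hk, V, A, hw, rfl, hA0⟩ := h.exists_walk_start haC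
  have hV0 : V 0 = u := by rw [← hau, ← hA0, hw.ends_eq 0 hk]
  refine isCycle_iff.mpr ⟨by omega, _, _, hw.of_contractArc hend huv he hk hV0, ?_⟩
  rw [Finset.image_range_add_one]
  rfl

theorem IsCycle.ends_ne_of_notMem (hend : D.ends e = (u, v)) {F : Finset ℕ}
    (htail : Set.InjOn (fun a => (D.ends a).1) F) (hhead : Set.InjOn (fun a => (D.ends a).2) F)
    (heF : e ∈ F) (hCF : C ⊆ F) (heC : e ∉ C) (h : IsCycle D C k) (ha : a ∈ C) :
    (D.ends a).1 ≠ u ∧ (D.ends a).1 ≠ v ∧ (D.ends a).2 ≠ v := by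
  have hne : ∀ b ∈ C, b ≠ e := fun b hb h => heC (h ▸ hb)
  have hhead_ne : ∀ b ∈ C, (D.ends b).2 ≠ v := fun b hb h =>
    hne b hb (hhead (hCF hb) heF (by simp only [h, hend]))
  obtain ⟨b, hb, hba⟩ := h.exists_head_eq_tail ha
  exact ⟨fun h' => hne a ha (htail (hCF ha) heF (by simp only [h', hend])),
    fun h' => hhead_ne b hb (hba.trans h'), hhead_ne a ha⟩

theorem IsCycle.contractArc_of_ends_ne (hend : D.ends e = (u, v)) (huv : u ≠ v)
    (h : IsCycle D C k) (hC : ∀ a ∈ C, (D.ends a).1 ≠ u ∧ (D.ends a).1 ≠ v ∧ (D.ends a).2 ≠ v) :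
    IsCycle (D.contractArc e) C k :=
  h.of_ends_eq
    (fun a ha => (mem_contractArc_A hend huv).mpr ⟨h.subset_A ha, (hC a ha).1, (hC a ha).2.2⟩)
    fun a ha => (contractArc_ends_eq_self hend huv (hC a ha).2.1 (hC a ha).2.2).symm

theorem IsCycle.of_contractArc (hend : D.ends e = (u, v)) (huv : u ≠ v)
    (h : IsCycle (D.contractArc e) C k) (hC : ∀ a ∈ C, ((D.contractArc e).ends a).1 ≠ u) :
    IsCycle D C k := by
  have hmem : ∀ a ∈ C, a ∈ D.A ∧ (D.ends a).1 ≠ u ∧ (D.ends a).2 ≠ v :=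
    fun a ha => (mem_contractArc_A hend huv).mp (h.subset_A ha)
  refine h.of_ends_eq (fun a ha => (hmem a ha).1)
    fun a ha => contractArc_ends_eq_self hend huv ?_ (hmem a ha).2.2
  exact fun h' => hC a ha ((contractArc_tail_eq_iff hend huv (h.subset_A ha)).mpr h')

theorem kcF_contractArc_erase (hend : D.ends e = (u, v)) (huv : u ≠ v) (he : e ∈ D.A)
    {F : Finset ℕ} (htail : Set.InjOn (fun a => (D.ends a).1) F)
    (hhead : Set.InjOn (fun a => (D.ends a).2) F) (heF : e ∈ F) :
    kcF D F = kcF (D.contractArc e) (F.erase e) := by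
  set D' := D.contractArc e
  -- a cycle of `D⟨F⟩` avoiding `e` avoids both of its ends, hence also lives in `D'`
  have havoid : ∀ {C k}, C ⊆ F → e ∉ C → IsCycle D C k →
      IsCycle D' C k ∧ ∀ a ∈ C, (D'.ends a).1 ≠ u := fun hCF heC h =>
    ⟨h.contractArc_of_ends_ne hend huv fun a ha =>
        h.ends_ne_of_notMem hend htail hhead heF hCF heC ha,
      fun a ha => by
        obtain ⟨h₁, h₂, h₃⟩ := h.ends_ne_of_notMem hend htail hhead heF hCF heC ha
        rwa [contractArc_ends_eq_self hend huv h₂ h₃]⟩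
  refine Finset.card_bij' (fun C _ => C.erase e)
    (fun C' _ => if ∃ a ∈ C', (D'.ends a).1 = u then insert e C' else C')
    (fun C hC => ?_) (fun C' hC' => ?_) (fun C hC => ?_) (fun C' hC' => ?_)
  all_goals simp only [Finset.mem_filter, Finset.mem_powerset] at *
  · obtain ⟨hCF, k, h⟩ := hC
    refine ⟨Finset.erase_subset_erase e hCF, ?_⟩
    by_cases heC : e ∈ C
    · exact ⟨k - 1, (h.contractArc_erase hend huv heC).1⟩
    · exact ⟨k, by simpa [Finset.erase_eq_of_notMem heC] using (havoid hCF heC h).1⟩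
  · obtain ⟨hCF, k, h⟩ := hC'
    split_ifs with hu
    · exact ⟨Finset.insert_subset heF (hCF.trans (Finset.erase_subset e F)), k + 1,
        h.insert_of_contractArc hend huv he hu⟩
    · push Not at hu
      exact ⟨hCF.trans (Finset.erase_subset e F), k, h.of_contractArc hend huv hu⟩
  · obtain ⟨hCF, k, h⟩ := hC
    by_cases heC : e ∈ C
    · rw [if_pos (h.contractArc_erase hend huv heC).2, Finset.insert_erase heC]
    · rw [Finset.erase_eq_of_notMem heC, if_neg]
      push Not
      exact (havoid hCF heC h).2
  · have heC' : e ∉ C' := fun h => (Finset.mem_erase.mp (hC'.1 h)).1 rfl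
    split_ifs
    · exact Finset.erase_insert heC'
    · exact Finset.erase_eq_of_notMem heC'

theorem IsCycleUnion.erase_mem_cycleUnions_contractArc (hend : D.ends e = (u, v)) (huv : u ≠ v)
    {F : Finset ℕ} (hFA : F ⊆ D.A) (hF : IsCycleUnion D F) (heF : e ∈ F) :
    F.erase e ∈ (D.contractArc e).cycleUnions ∧
      ∃ b ∈ F.erase e, ((D.contractArc e).ends b).2 = u := by
  have hsub : F.erase e ⊆ (D.contractArc e).A := fun a ha => by
    obtain ⟨hae, haF⟩ := Finset.mem_erase.mp ha
    refine (mem_contractArc_A hend huv).mpr ⟨hFA haF, fun h => hae ?_, fun h => hae ?_⟩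
    exacts [hF.tail_injOn haF heF (by simp only [h, hend]),
      hF.head_injOn haF heF (by simp only [h, hend])]
  have hhead : ∀ a ∈ F.erase e, ((D.contractArc e).ends a).2 = (D.ends a).2 :=
    fun a ha => contractArc_head_of_mem hend huv (hsub ha)
  have hpred : ∀ a ∈ F, (D.ends a).1 ≠ v → ∃ b ∈ F.erase e, (D.ends b).2 = (D.ends a).1 := by
    intro a haF hav
    obtain ⟨b, hbF, hba⟩ := hF.exists_head_eq_tail a haF
    refine ⟨b, Finset.mem_erase.mpr ⟨fun hbe => hav ?_, hbF⟩, hba⟩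
    rw [← hba, hbe, hend]
  obtain ⟨b, hb, hbu⟩ := hpred e heF (by rw [hend]; exact huv)
  rw [hend] at hbu
  refine ⟨mem_cycleUnions.mpr ⟨hsub, ⟨fun a₁ ha₁ a₂ ha₂ h => ?_, ?_, fun a ha => ?_⟩⟩,
    b, hb, (hhead b hb).trans hbu⟩
  · refine hF.tail_injOn (Finset.mem_of_mem_erase ha₁) (Finset.mem_of_mem_erase ha₂) ?_
    simp only at h ⊢
    rw [tail_eq_of_mem_contractArc_A hend huv (hsub ha₁),
      tail_eq_of_mem_contractArc_A hend huv (hsub ha₂), h]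
  · exact (hF.head_injOn.mono (Finset.coe_subset.mpr (Finset.erase_subset e F))).congr
      fun a ha => (hhead a ha).symm
  · by_cases hav : (D.ends a).1 = v
    · exact ⟨b, hb, by rw [hhead b hb, hbu, contractArc_tail hend huv, if_pos hav]⟩
    · obtain ⟨c, hc, hca⟩ := hpred a (Finset.mem_of_mem_erase ha) hav
      exact ⟨c, hc, by rw [hhead c hc, hca, contractArc_tail hend huv, if_neg hav]⟩

theorem insert_mem_cycleUnions_of_contractArc (hend : D.ends e = (u, v)) (huv : u ≠ v)
    (he : e ∈ D.A) {F : Finset ℕ} (hF : F ∈ (D.contractArc e).cycleUnions)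
    (hu : ∃ b ∈ F, ((D.contractArc e).ends b).2 = u) :
    insert e F ∈ D.cycleUnions := by
  obtain ⟨hFA, hF⟩ := mem_cycleUnions.mp hF
  have hmem : ∀ a ∈ F, a ∈ D.A ∧ (D.ends a).1 ≠ u ∧ (D.ends a).2 ≠ v :=
    fun a ha => (mem_contractArc_A hend huv).mp (hFA ha)
  have hhead : ∀ a ∈ F, ((D.contractArc e).ends a).2 = (D.ends a).2 :=
    fun a ha => contractArc_head_of_mem hend huv (hFA ha)
  have heF : e ∉ F := fun h => notMem_contractArc_A hend huv (hFA h)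
  refine mem_cycleUnions.mpr ⟨Finset.insert_subset he fun a ha => (hmem a ha).1, ?_, ?_, ?_⟩
  · rw [Finset.coe_insert, Set.injOn_insert (Finset.mem_coe.not.mpr heF)]
    refine ⟨fun a ha b hb hab => hF.tail_injOn ha hb ?_, ?_⟩
    · simp only at hab ⊢
      rw [contractArc_tail hend huv, contractArc_tail hend huv, hab]
    · rintro ⟨a, ha, hae⟩
      exact (hmem a ha).2.1 (hae.trans (by rw [hend]))
  · rw [Finset.coe_insert, Set.injOn_insert (Finset.mem_coe.not.mpr heF)]
    refine ⟨hF.head_injOn.congr hhead, ?_⟩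
    rintro ⟨a, ha, hae⟩
    exact (hmem a ha).2.2 (hae.trans (by rw [hend]))
  · intro a ha
    rcases Finset.mem_insert.mp ha with rfl | ha
    · obtain ⟨b, hb, hbu⟩ := hu
      exact ⟨b, Finset.mem_insert_of_mem hb, by rw [← hhead b hb, hbu, hend]⟩
    · by_cases hav : (D.ends a).1 = v
      · exact ⟨e, Finset.mem_insert_self e F, by rw [hend, hav]⟩
      · obtain ⟨b, hb, hba⟩ := hF.exists_head_eq_tail a ha
        refine ⟨b, Finset.mem_insert_of_mem hb, ?_⟩
        rw [← hhead b hb, hba, contractArc_tail hend huv, if_neg hav]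

theorem sum_filter_mem_eq_X_mul_sum_contractArc (hend : D.ends e = (u, v)) (huv : u ≠ v)
    (he : e ∈ D.A) :
    ∑ F ∈ D.cycleUnions.filter (e ∈ ·), D.cycleMonomial F =
      MvPolynomial.X 0 * ∑ F ∈ (D.contractArc e).cycleUnions.filter
        (fun F => ∃ b ∈ F, ((D.contractArc e).ends b).2 = u),
        (D.contractArc e).cycleMonomial F := by
  rw [Finset.mul_sum]
  refine Finset.sum_nbij' (fun F => F.erase e) (insert e) (fun F hF => ?_) (fun F hF => ?_)
    (fun F hF => ?_) (fun F hF => ?_) (fun F hF => ?_)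
  all_goals simp only [Finset.mem_filter] at hF ⊢
  · obtain ⟨hFA, hFU⟩ := mem_cycleUnions.mp hF.1
    exact hFU.erase_mem_cycleUnions_contractArc hend huv hFA hF.2
  · exact ⟨insert_mem_cycleUnions_of_contractArc hend huv he hF.1 hF.2, Finset.mem_insert_self e F⟩
  · exact Finset.insert_erase hF.2
  · exact Finset.erase_insert fun h =>
      notMem_contractArc_A hend huv ((mem_cycleUnions.mp hF.1).1 h)
  · obtain ⟨-, hF'⟩ := mem_cycleUnions.mp hF.1
    rw [cycleMonomial, cycleMonomial, ← Finset.card_erase_add_one hF.2,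
      kcF_contractArc_erase hend huv he hF'.tail_injOn hF'.head_injOn hF.2, pow_succ]
    ring

theorem mem_extractArc_A (hend : D.ends e = (u, v)) (huv : u ≠ v) :
    a ∈ (D.extractArc e).A ↔ a ∈ (D.contractArc e).A ∧
      ((D.contractArc e).ends a).1 ≠ u ∧ ((D.contractArc e).ends a).2 ≠ u := by
  simp only [extractArc, hend, Finset.mem_filter, mem_contractArc_A hend huv,
    contractArc_tail hend huv, contractArc_head hend huv]
  grind

theorem contractArc_ends_eq_of_mem_extractArc (hend : D.ends e = (u, v)) (huv : u ≠ v)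
    (ha : a ∈ (D.extractArc e).A) : (D.contractArc e).ends a = (D.extractArc e).ends a := by
  obtain ⟨-, -, h₁, -, h₂⟩ := Finset.mem_filter.mp ha
  exact contractArc_ends_eq_self hend huv (by rwa [hend] at h₁) (by rwa [hend] at h₂)

theorem mem_cycleUnions_extractArc (hend : D.ends e = (u, v)) (huv : u ≠ v) {F : Finset ℕ} :
    F ∈ (D.extractArc e).cycleUnions ↔ F ∈ (D.contractArc e).cycleUnions.filter
      (fun F => ¬∃ b ∈ F, ((D.contractArc e).ends b).2 = u) := by
  constructor
  · intro hF
    obtain ⟨hFA, hF⟩ := mem_cycleUnions.mp hF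
    have hFA' : ∀ a ∈ F, a ∈ (D.contractArc e).A ∧ _ :=
      fun a ha => (mem_extractArc_A hend huv).mp (hFA ha)
    refine Finset.mem_filter.mpr ⟨mem_cycleUnions.mpr ⟨fun a ha => (hFA' a ha).1,
      hF.of_ends_eq fun a ha => (contractArc_ends_eq_of_mem_extractArc hend huv (hFA ha)).symm⟩,
      fun ⟨b, hb, hbu⟩ => (hFA' b hb).2.2 hbu⟩
  · intro hF
    obtain ⟨hF, hu⟩ := Finset.mem_filter.mp hF
    obtain ⟨hFA, hF⟩ := mem_cycleUnions.mp hF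
    -- in a union of cycles, the merged vertex is entered by an arc iff it is left by one
    have hsub : F ⊆ (D.extractArc e).A := fun a ha => by
      obtain ⟨b, hb, hba⟩ := hF.exists_head_eq_tail a ha
      exact (mem_extractArc_A hend huv).mpr
        ⟨hFA ha, fun h => hu ⟨b, hb, hba.trans h⟩, fun h => hu ⟨a, ha, h⟩⟩
    exact mem_cycleUnions.mpr ⟨hsub,
      hF.of_ends_eq fun a ha => contractArc_ends_eq_of_mem_extractArc hend huv (hsub ha)⟩

theorem sum_filter_not_covered_eq_biCycPoly_extractArc (hend : D.ends e = (u, v)) (huv : u ≠ v) :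
    ∑ F ∈ (D.contractArc e).cycleUnions.filter
        (fun F => ¬∃ b ∈ F, ((D.contractArc e).ends b).2 = u), (D.contractArc e).cycleMonomial F =
      (D.extractArc e).biCycPoly := by
  refine sum_cycleMonomial_eq_biCycPoly (fun F => (mem_cycleUnions_extractArc hend huv).symm)
    fun F hF => ⟨(mem_cycleUnions.mp (Finset.mem_filter.mp hF).1).1, fun a ha => ?_⟩
  have hFA := (mem_cycleUnions.mp ((mem_cycleUnions_extractArc hend huv).mpr hF)).1
  exact contractArc_ends_eq_of_mem_extractArc hend huv (hFA ha)

end Contraction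

end MDigraph

theorem biCycPoly_nonloop_general (D : MDigraph)
    (e : ℕ) (he : e ∈ D.A) (hnl : ¬ D.IsLoop e) :
    D.biCycPoly = (D.delArc e).biCycPoly +
      MvPolynomial.X 0 * (D.contractArc e).biCycPoly -
      MvPolynomial.X 0 * (D.extractArc e).biCycPoly := by
  obtain ⟨u, v, hend⟩ : ∃ u v, D.ends e = (u, v) := ⟨_, _, rfl⟩
  have huv : u ≠ v := by rwa [MDigraph.IsLoop, hend] at hnl
  rw [MDigraph.biCycPoly_eq_sum, ← Finset.sum_filter_add_sum_filter_not _ (e ∈ ·),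
    MDigraph.sum_filter_mem_eq_X_mul_sum_contractArc hend huv he,
    MDigraph.sum_filter_notMem_eq_biCycPoly_delArc,
    MDigraph.biCycPoly_eq_sum (D := D.contractArc e),
    ← Finset.sum_filter_add_sum_filter_not (D.contractArc e).cycleUnions
      (fun F => ∃ b ∈ F, ((D.contractArc e).ends b).2 = u),
    MDigraph.sum_filter_not_covered_eq_biCycPoly_extractArc hend huv]
  ring

/-- for a non-loop arc `e = (u,v)` of `D`,
`σ̂(D;x,y) = σ̂(D_{-e};x,y) + x·σ̂(D_{/e};x,y) − x·σ̂(D_{†e};x,y)`. -/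
theorem biCycPoly_nonloop (D : MDigraph) (hwf : D.WellFormed)
    (e : ℕ) (he : e ∈ D.A) (hnl : ¬ D.IsLoop e) :
    D.biCycPoly = (D.delArc e).biCycPoly +
      MvPolynomial.X 0 * (D.contractArc e).biCycPoly -
      MvPolynomial.X 0 * (D.extractArc e).biCycPoly :=
  biCycPoly_nonloop_general D e he hnl
end

section
/- Let D=(V,E) be a finite multidigraph. Then for every nonzero real number x and every real y, the geometric cover polynomial satisfies C̃(D;x,y) = x^{|V|}·σ̂π(D; 1/x, y, 1). -/
open Classical

/-! In a degree-constrained `D⟨F⟩` the arcs of `F` have pairwise distinct heads, and a covered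
vertex is either such a head or the initial vertex of a path component. Hence `|F| + kp`
vertices are covered, the remaining `|V| - |F| - kp` are isolated, and a cover with `kp`
nontrivial paths has `kp + (|V| - |F| - kp) = |V| - |F|` paths in all: the summand
`x ^ paths * y ^ cycles` of `C̃` is the summand `x ^ |V| * (1/x) ^ |F| * y ^ kc` of
`x ^ |V| * σ̂π(1/x, y, 1)`. -/

namespace MDigraph

variable (D : MDigraph) {F : Finset ℕ}

theorem card_image_head_of_degOK (hdeg : D.DegOK F) :
    (F.image fun a => (D.ends a).2).card = F.card := by
  refine Finset.card_image_of_injOn fun a ha b hb hab => ?_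
  exact Finset.card_le_one.mp (hdeg (D.ends a).2).2 a
    (Finset.mem_filter.mpr ⟨ha, rfl⟩) b (Finset.mem_filter.mpr ⟨hb, hab.symm⟩)

theorem kpF_eq_card_sdiff :
    D.kpF F = ((F.image fun a => (D.ends a).1) \ F.image fun a => (D.ends a).2).card := by
  unfold kpF
  congr 1
  ext w
  simp only [Finset.mem_filter, Finset.mem_sdiff, Finset.card_eq_zero,
    Finset.filter_eq_empty_iff, Finset.mem_image, not_exists, not_and]

theorem coveredCard_eq_card_add_kpF (hdeg : D.DegOK F) :
    D.coveredCard F = F.card + D.kpF F := by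
  rw [coveredCard, ← Finset.card_sdiff_add_card, kpF_eq_card_sdiff,
    card_image_head_of_degOK D hdeg, add_comm]

theorem coveredCard_le_card_V (hwf : D.WellFormed) (hF : F ⊆ D.A) :
    D.coveredCard F ≤ D.V.card := by
  refine Finset.card_le_card fun w hw => ?_
  simp only [Finset.mem_union, Finset.mem_image] at hw
  rcases hw with ⟨a, ha, rfl⟩ | ⟨a, ha, rfl⟩
  exacts [(hwf a (hF ha)).1, (hwf a (hF ha)).2]

theorem kpF_add_uncovered (hwf : D.WellFormed) (hF : F ⊆ D.A) (hdeg : D.DegOK F) :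
    D.kpF F + (D.V.card - D.coveredCard F) = D.V.card - F.card := by
  have := D.coveredCard_le_card_V hwf hF
  rw [D.coveredCard_eq_card_add_kpF hdeg] at this ⊢
  omega

theorem card_le_card_V_of_degOK (hwf : D.WellFormed) (hF : F ⊆ D.A) (hdeg : D.DegOK F) :
    F.card ≤ D.V.card := by
  have := D.coveredCard_le_card_V hwf hF
  rw [D.coveredCard_eq_card_add_kpF hdeg] at this
  omega

end MDigraph

/-- for every nonzero real `x` and every real `y`,
`C̃(D;x,y) = x^{|V|}·σ̂π(D; 1/x, y, 1)`. -/
theorem geomCover_eq_triPoly (D : MDigraph) (hwf : D.WellFormed)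
    (x y : ℝ) (hx : x ≠ 0) :
    D.geomCover x y =
      x ^ D.V.card * MvPolynomial.eval (![1 / x, y, 1] : Fin 3 → ℝ) D.triPoly := by
  rw [MDigraph.geomCover, MDigraph.triPoly, map_sum, Finset.mul_sum]
  refine Finset.sum_congr rfl fun F hF => ?_
  obtain ⟨hFA, hdeg⟩ := Finset.mem_filter.mp hF
  rw [Finset.mem_powerset] at hFA
  simp only [map_mul, map_pow, MvPolynomial.eval_X, Matrix.cons_val_zero, Matrix.cons_val_one,
    Matrix.cons_val_two, Matrix.head_cons, Matrix.tail_cons, one_pow, mul_one]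
  rw [D.kpF_add_uncovered hwf hFA hdeg, pow_sub₀ x hx (D.card_le_card_V_of_degOK hwf hFA hdeg),
    one_div, inv_pow, mul_assoc]
end
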